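/- The metric C_G(ρ,σ) = √(1 - G(ρ,σ)) on Jamiołkowski states fails the chaining inequality: there exist channels Φ₁, Φ₂, Ψ₁, Ψ₂ (with the Jamiołkowski states given explicitly) such that C_G(ρ_{Ψ₁∘Φ₁}, ρ_{Ψ₂∘Φ₂}) = 1/√2 > C_G(ρ_{Φ₁},ρ_{Φ₂}) + C_G(ρ_{Ψ₁},ρ_{Ψ₂}) = 1/2. -/
import Mathlib


open Matrix

noncomputable def sG {N : ℕ} (ρ σ : Matrix (Fin N) (Fin N) ℂ) : ℝ :=
  (trace (ρ * σ)).re +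
    Real.sqrt (1 - (trace (ρ * ρ)).re) * Real.sqrt (1 - (trace (σ * σ)).re)

noncomputable def CG {N : ℕ} (ρ σ : Matrix (Fin N) (Fin N) ℂ) : ℝ :=
  Real.sqrt (1 - sG ρ σ)

noncomputable def ρΦ₁ : Matrix (Fin 4) (Fin 4) ℂ :=
  ((1 : ℂ) / 2) • Matrix.diagonal ![1, 1, 0, 0]

noncomputable def ρΦ₂ : Matrix (Fin 4) (Fin 4) ℂ :=
  ((1 : ℂ) / 2) • Matrix.diagonal ![1, 1, 0, 0]

noncomputable def ρΨ₁ : Matrix (Fin 4) (Fin 4) ℂ :=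
  ((1 : ℂ) / 2) • Matrix.diagonal ![1, 0, 0, 1]

noncomputable def ρΨ₂ : Matrix (Fin 4) (Fin 4) ℂ :=
  ((1 : ℂ) / 2) • Matrix.diagonal ![0, 0, 1, 1]

noncomputable def ρΨ₁Φ₁ : Matrix (Fin 4) (Fin 4) ℂ :=
  ((1 : ℂ) / 2) • Matrix.diagonal ![1, 1, 0, 0]

noncomputable def ρΨ₂Φ₂ : Matrix (Fin 4) (Fin 4) ℂ :=
  ((1 : ℂ) / 2) • Matrix.diagonal ![0, 0, 1, 1]

theorem CG_chaining_fails :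
    CG ρΨ₁Φ₁ ρΨ₂Φ₂ = 1 / Real.sqrt 2 ∧
    CG ρΦ₁ ρΦ₂ + CG ρΨ₁ ρΨ₂ = 1 / 2 ∧
    CG ρΦ₁ ρΦ₂ + CG ρΨ₁ ρΨ₂ < CG ρΨ₁Φ₁ ρΨ₂Φ₂ := by
  have key : (1:ℝ) - (2⁻¹*2⁻¹+2⁻¹*2⁻¹) = 1/2 := by norm_num
  have hA : sG ρΨ₁Φ₁ ρΨ₂Φ₂ = 1/2 := by
    simp [sG, ρΨ₁Φ₁, ρΨ₂Φ₂, Matrix.trace, Matrix.mul_apply, Matrix.diagonal,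
      Fin.sum_univ_four, Complex.ext_iff]
    rw [key, Real.mul_self_sqrt (by norm_num : (0:ℝ) ≤ 1/2)]
    norm_num
  have hB : sG ρΦ₁ ρΦ₂ = 1 := by
    simp [sG, ρΦ₁, ρΦ₂, Matrix.trace, Matrix.mul_apply, Matrix.diagonal,
      Fin.sum_univ_four, Complex.ext_iff]
    rw [key, Real.mul_self_sqrt (by norm_num : (0:ℝ) ≤ 1/2)]
    norm_num
  have hC : sG ρΨ₁ ρΨ₂ = 3/4 := by
    simp [sG, ρΨ₁, ρΨ₂, Matrix.trace, Matrix.mul_apply, Matrix.diagonal,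
      Fin.sum_univ_four, Complex.ext_iff]
    rw [key, Real.mul_self_sqrt (by norm_num : (0:ℝ) ≤ 1/2)]
    norm_num
  have h14 : Real.sqrt (1 - 3/4) = 1/2 := by
    rw [show (1:ℝ) - 3/4 = (1/2)^2 by norm_num, Real.sqrt_sq (by norm_num)]
  have h12 : Real.sqrt (1 - 1/2) = 1 / Real.sqrt 2 := by
    rw [show (1:ℝ) - 1/2 = 2⁻¹ by norm_num, Real.sqrt_inv, one_div]
  refine ⟨?_, ?_, ?_⟩
  · rw [CG, hA, h12]
  · rw [CG, CG, hB, hC, h14]; simp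
  · rw [CG, CG, CG, hA, hB, hC, h14, h12]
    simp only [sub_self, Real.sqrt_zero, zero_add]
    rw [lt_div_iff₀ (by positivity)]
    nlinarith [Real.sq_sqrt (by norm_num : (0:ℝ) ≤ 2), Real.sqrt_nonneg 2]
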